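/- Let F_2 be the free group on generators α, β. Every element of F_2 can be written uniquely in the normal form α^{ε_1}β^{δ_1}⋯α^{ε_n}β^{δ_n} with ε_i, δ_i ∈ {-1,0,1} (and no cancellation), and define d(α^{ε_1}β^{δ_1}⋯α^{ε_n}β^{δ_n}) = Σ_{i=1}^n δ_i Σ_{j=1}^i ε_j. Then for all u, v ∈ F_2, d(uv) = d(u) + d(v) + e_α(u)·e_β(v), where e_α(w) and e_β(w) denote the exponent sums of α and β in w respectively. -/

import Mathlib

/-!
The map `w ↦ (e_α(w), e_β(w), d(w))` is the homomorphism from `F₂` to the integral Heisenberg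
group `(a, b, c) * (a', b', c') = (a + a', b + b', c + c' + a b')` sending `α ↦ (1, 0, 0)` and
`β ↦ (0, 1, 0)`: multiplying the image of a word on the left by `α^ε` adds `ε · e_β` to the
third coordinate, which is exactly how `d` changes when the running α-exponent sum is shifted
by `ε`. The formula is the third coordinate of multiplicativity.
-/

/-- sign of a `Bool` exponent: `true ↦ 1`, `false ↦ -1`. -/
def sgn (b : Bool) : ℤ := if b then 1 else -1

/-- Auxiliary computation of Morita's function `d` on a (reduced) word in the
free group on two generators (`false` = α, `true` = β), keeping a running
sum `acc` of the α-exponents read so far.  Each letter `β^{δ}` contributes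
`δ * acc`. -/
def dWord : List (Bool × Bool) → ℤ → ℤ
  | [], _ => 0
  | (g, s) :: rest, acc =>
      if g then sgn s * acc + dWord rest acc
      else dWord rest (acc + sgn s)

/-- Morita's function `d : F₂ → ℤ`, defined on the normal form
`α^{ε_1}β^{δ_1}⋯α^{ε_n}β^{δ_n}` by `d = Σ_i δ_i (ε_1 + ⋯ + ε_i)`,
computed here from the reduced word. -/
def moritaD (w : FreeGroup Bool) : ℤ := dWord w.toWord 0

/-- Exponent sum of the generator `g` in the word `w`. -/
def expSum (g : Bool) (w : FreeGroup Bool) : ℤ :=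
  (w.toWord.map fun p => if p.1 = g then sgn p.2 else 0).sum

/-- The generator α of F₂. -/
def genα : FreeGroup Bool := FreeGroup.of false

/-- The generator β of F₂. -/
def genβ : FreeGroup Bool := FreeGroup.of true

@[ext]
structure Heis (R : Type*) where
  a : R
  b : R
  c : R

namespace Heis

variable {R : Type*} [CommRing R]

instance : Mul (Heis R) := ⟨fun x y => ⟨x.a + y.a, x.b + y.b, x.c + y.c + x.a * y.b⟩⟩
instance : One (Heis R) := ⟨⟨0, 0, 0⟩⟩
instance : Inv (Heis R) := ⟨fun x => ⟨-x.a, -x.b, -x.c + x.a * x.b⟩⟩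

@[simp] theorem mul_a (x y : Heis R) : (x * y).a = x.a + y.a := rfl
@[simp] theorem mul_b (x y : Heis R) : (x * y).b = x.b + y.b := rfl
@[simp] theorem mul_c (x y : Heis R) : (x * y).c = x.c + y.c + x.a * y.b := rfl
@[simp] theorem one_a : (1 : Heis R).a = 0 := rfl
@[simp] theorem one_b : (1 : Heis R).b = 0 := rfl
@[simp] theorem one_c : (1 : Heis R).c = 0 := rfl
@[simp] theorem inv_a (x : Heis R) : x⁻¹.a = -x.a := rfl
@[simp] theorem inv_b (x : Heis R) : x⁻¹.b = -x.b := rfl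
@[simp] theorem inv_c (x : Heis R) : x⁻¹.c = -x.c + x.a * x.b := rfl

instance : Group (Heis R) where
  mul_assoc x y z := by ext <;> simp <;> ring
  one_mul x := by ext <;> simp
  mul_one x := by ext <;> simp
  inv_mul_cancel x := by ext <;> simp

end Heis

def wordExpSum (g : Bool) (L : List (Bool × Bool)) : ℤ :=
  (L.map fun p => if p.1 = g then sgn p.2 else 0).sum

theorem dWord_eq_add_mul (L : List (Bool × Bool)) (acc : ℤ) :
    dWord L acc = dWord L 0 + acc * wordExpSum true L := by
  induction L generalizing acc with
  | nil => simp [dWord, wordExpSum]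
  | cons p rest ih =>
    obtain ⟨g, s⟩ := p
    cases g
    · simp only [dWord, wordExpSum, List.map_cons, List.sum_cons, Bool.false_eq_true,
        if_false, zero_add] at ih ⊢
      rw [ih (acc + sgn s), ih (sgn s)]
      ring
    · simp only [dWord, wordExpSum, List.map_cons, List.sum_cons, if_true] at ih ⊢
      rw [ih acc]
      ring

def heisGen (g : Bool) : Heis ℤ := if g then ⟨0, 1, 0⟩ else ⟨1, 0, 0⟩

def heisHom : FreeGroup Bool →* Heis ℤ := FreeGroup.lift heisGen

theorem cond_heisGen (g s : Bool) :
    cond s (heisGen g) (heisGen g)⁻¹ = ⟨if g then 0 else sgn s, if g then sgn s else 0, 0⟩ := by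
  cases g <;> cases s <;> rfl

theorem prod_map_heisGen (L : List (Bool × Bool)) :
    (L.map fun p => cond p.2 (heisGen p.1) (heisGen p.1)⁻¹).prod =
      ⟨wordExpSum false L, wordExpSum true L, dWord L 0⟩ := by
  induction L with
  | nil => rfl
  | cons p rest ih =>
    obtain ⟨g, s⟩ := p
    rw [List.map_cons, List.prod_cons, ih, cond_heisGen]
    cases g
    · ext <;> simp [wordExpSum, dWord, dWord_eq_add_mul rest (sgn s)]
    · ext <;> simp [wordExpSum, dWord]

theorem heisHom_apply (w : FreeGroup Bool) :
    heisHom w = ⟨expSum false w, expSum true w, moritaD w⟩ := by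
  conv_lhs => rw [← FreeGroup.mk_toWord (x := w)]
  rw [heisHom, FreeGroup.lift_mk, prod_map_heisGen]
  rfl

/-- For all `u, v ∈ F₂`, `d(uv) = d(u) + d(v) + e_α(u)·e_β(v)`. -/
theorem morita_d_mul (u v : FreeGroup Bool) :
    moritaD (u * v) = moritaD u + moritaD v + expSum false u * expSum true v := by
  simpa only [heisHom_apply, Heis.mul_c] using congrArg Heis.c (heisHom.map_mul u v)
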